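/- Define the kernel K₁(z,t) = (4e^{-t})^{iM}((1+e^{-t})² - z²)^{-1/2-iM} F(1/2+iM, 1/2+iM; 1; ((1-e^{-t})² - z²)/((1+e^{-t})² - z²)) for 0 ≤ z ≤ 1 - e^{-t}. Then for every ρ ∈ [1,2) there is a constant C such that (∫₀^{1-e^{-t}} |K₁(z,t)|^ρ dz)^{1/ρ} ≤ C (1+t)(1 - e^{-t})^{1/ρ} for all t > 0. -/

import Mathlib

/-- The Gauss hypergeometric function `F(a,b;c;z)`, defined by its power series. -/
noncomputable def hypC (a b c z : ℂ) : ℂ :=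
  ∑' n : ℕ, ((ascPochhammer ℂ n).eval a * (ascPochhammer ℂ n).eval b /
    ((ascPochhammer ℂ n).eval c * (n.factorial : ℂ))) * z ^ n

/-- The kernel `E(x,t;0,b)` of the fundamental solution of the Klein–Gordon
equation in de Sitter spacetime. -/
noncomputable def Ek (M : ℝ) (x t b : ℝ) : ℂ :=
  (4 * Real.exp (-b - t) : ℂ) ^ (Complex.I * M) *
    ((Real.exp (-t) + Real.exp (-b) : ℂ) ^ 2 - (x : ℂ) ^ 2) ^ (-(1/2 : ℂ) - Complex.I * M) *
    hypC (1/2 + Complex.I * M) (1/2 + Complex.I * M) 1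
      (((Real.exp (-b) - Real.exp (-t) : ℂ) ^ 2 - (x : ℂ) ^ 2) /
        ((Real.exp (-b) + Real.exp (-t) : ℂ) ^ 2 - (x : ℂ) ^ 2))

/-! Termwise, `|(1/2+iM)ₙ|² = ∏ₖ ((k+1/2)² + M²) ≤ e^{M² ∑ (k+1/2)⁻²} ((1/2)ₙ)² ≤ e^{5M²} ((1/2)ₙ)²`
and `((1/2)ₙ / n!)² ≤ 1/(2n+1)`, so for `|ζ| < 1`
`|F(1/2+iM, 1/2+iM; 1; ζ)| ≤ e^{5M²} ∑ |ζ|ⁿ/(2n+1) ≤ e^{5M²} (1 - log (1 - |ζ|))`.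
For `K₁(z,t)` with `0 ≤ z ≤ 1 - e^{-t}` the argument satisfies
`1 - ζ = 4e^{-t} / ((1+e^{-t})² - z²) ≥ e^{-t}`, whence
`|K₁(z,t)| ≤ e^{5M²} (1+t) ((1+e^{-t})² - z²)^{-1/2}`.
Finally `(1+e^{-t})² - z² ≥ 1 + e^{-t} - z`, and the mean of the decreasing function `u^{-ρ/2}`
over `[2e^{-t}, 1+e^{-t}]` is at most `(1+e^{-t})^{-ρ/2} / (1 - ρ/2) ≤ 2/(2-ρ)`. -/

open Finset
open Complex (I)

theorem norm_ascPochhammer_add_I_mul_sq_le {x : ℝ} (hx : 0 < x) (M : ℝ) (n : ℕ) :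
    ‖(ascPochhammer ℂ n).eval (x + I * M)‖ ^ 2 ≤
      Real.exp (M ^ 2 * ∑ k ∈ range n, ((k + x) ^ 2)⁻¹) * ((ascPochhammer ℝ n).eval x) ^ 2 := by
  induction n with
  | zero => simp
  | succ n ih =>
    have hstep : ‖(x + I * M) + n‖ ^ 2 ≤ Real.exp (M ^ 2 * ((n + x) ^ 2)⁻¹) * (x + n) ^ 2 := by
      calc ‖(x + I * M) + n‖ ^ 2 = (n + x) ^ 2 + M ^ 2 := by
            simp only [Complex.sq_norm, Complex.normSq_apply, Complex.add_re, Complex.ofReal_re,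
              Complex.mul_re, Complex.I_re, zero_mul, Complex.I_im, Complex.ofReal_im, mul_zero,
              sub_self, add_zero, Complex.natCast_re, Complex.add_im, Complex.mul_im, one_mul,
              zero_add, Complex.natCast_im]
            ring
        _ = (n + x) ^ 2 * (M ^ 2 * ((n + x) ^ 2)⁻¹ + 1) := by field_simp; ring
        _ ≤ (n + x) ^ 2 * Real.exp (M ^ 2 * ((n + x) ^ 2)⁻¹) := by
            gcongr; exact Real.add_one_le_exp _
        _ = _ := by ring
    rw [ascPochhammer_succ_eval, ascPochhammer_succ_eval, norm_mul, mul_pow, mul_pow,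
      sum_range_succ, mul_add, Real.exp_add]
    calc _ ≤ Real.exp (M ^ 2 * ∑ k ∈ range n, ((k + x) ^ 2)⁻¹) * ((ascPochhammer ℝ n).eval x) ^ 2
          * (Real.exp (M ^ 2 * ((n + x) ^ 2)⁻¹) * (x + n) ^ 2) := by gcongr
      _ = _ := by ring

theorem sum_range_inv_add_half_sq_le (n : ℕ) :
    ∑ k ∈ range n, (((k : ℝ) + 1 / 2) ^ 2)⁻¹ ≤ 5 - (n : ℝ)⁻¹ := by
  induction n with
  | zero => simp
  | succ n ih =>
    rcases Nat.eq_zero_or_pos n with rfl | hn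
    · norm_num
    · have hn' : (1 : ℝ) ≤ n := by exact_mod_cast hn
      have hterm : (((n : ℝ) + 1 / 2) ^ 2)⁻¹ ≤ ((n : ℝ) * (n + 1))⁻¹ :=
        inv_anti₀ (by positivity) (by nlinarith)
      have htelescope : ((n : ℝ) * (n + 1))⁻¹ = (n : ℝ)⁻¹ - ((n : ℝ) + 1)⁻¹ := by
        field_simp; ring
      rw [sum_range_succ]
      push_cast
      linarith

theorem ascPochhammer_eval_half_sq_mul_le (n : ℕ) :
    ((ascPochhammer ℝ n).eval (1 / 2)) ^ 2 * (2 * n + 1) ≤ (n.factorial : ℝ) ^ 2 := by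
  induction n with
  | zero => simp
  | succ n ih =>
    rw [ascPochhammer_succ_eval, Nat.factorial_succ]
    push_cast
    have hstep : ((1 : ℝ) / 2 + n) ^ 2 * (2 * (n + 1) + 1) ≤ (2 * n + 1) * (n + 1) ^ 2 := by
      nlinarith
    calc _ = ((ascPochhammer ℝ n).eval (1 / 2)) ^ 2 * (((1 : ℝ) / 2 + n) ^ 2 * (2 * (n + 1) + 1)) :=
          by ring
      _ ≤ ((ascPochhammer ℝ n).eval (1 / 2)) ^ 2 * ((2 * n + 1) * (n + 1) ^ 2) := by gcongr
      _ ≤ (n.factorial : ℝ) ^ 2 * (n + 1) ^ 2 := by nlinarith [sq_nonneg ((n : ℝ) + 1)]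
      _ = _ := by ring

theorem norm_hypC_half_add_I_mul_coeff_le (M : ℝ) (n : ℕ) :
    ‖(ascPochhammer ℂ n).eval (1 / 2 + I * M) * (ascPochhammer ℂ n).eval (1 / 2 + I * M) /
        ((ascPochhammer ℂ n).eval 1 * (n.factorial : ℂ))‖ ≤ Real.exp (5 * M ^ 2) / (2 * n + 1) := by
  have hpoch := norm_ascPochhammer_add_I_mul_sq_le one_half_pos M n
  push_cast at hpoch
  have hsum : ∑ k ∈ range n, ((k + 1 / 2 : ℝ) ^ 2)⁻¹ ≤ 5 :=
    (sum_range_inv_add_half_sq_le n).trans (sub_le_self _ (by positivity))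
  have hexp : Real.exp (M ^ 2 * ∑ k ∈ range n, ((k + 1 / 2 : ℝ) ^ 2)⁻¹) ≤ Real.exp (5 * M ^ 2) :=
    Real.exp_le_exp.2 (by rw [mul_comm 5]; exact mul_le_mul_of_nonneg_left hsum (sq_nonneg M))
  rw [norm_div, norm_mul, ← sq, ascPochhammer_eval_one, norm_mul, ← sq, Complex.norm_natCast,
    div_le_div_iff₀ (by positivity) (by positivity)]
  calc _ ≤ Real.exp (5 * M ^ 2) * ((ascPochhammer ℝ n).eval (1 / 2)) ^ 2 * (2 * n + 1) := by
        gcongr; exact hpoch.trans (by gcongr)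
    _ ≤ _ := by
        rw [mul_assoc]; gcongr; exact ascPochhammer_eval_half_sq_mul_le n

theorem norm_hypC_half_add_I_mul_le (M : ℝ) {w : ℂ} (hw : ‖w‖ < 1) :
    ‖hypC (1 / 2 + I * M) (1 / 2 + I * M) 1 w‖ ≤
      Real.exp (5 * M ^ 2) * (1 - Real.log (1 - ‖w‖)) := by
  set K := Real.exp (5 * M ^ 2)
  set f : ℕ → ℂ := fun n => (ascPochhammer ℂ n).eval (1 / 2 + I * M) *
    (ascPochhammer ℂ n).eval (1 / 2 + I * M) /
      ((ascPochhammer ℂ n).eval 1 * (n.factorial : ℂ)) * w ^ n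
  have hf : ∀ n : ℕ, ‖f n‖ ≤ K * ‖w‖ ^ n / (2 * n + 1) := fun n => by
    rw [norm_mul, norm_pow]
    calc _ ≤ K / (2 * n + 1) * ‖w‖ ^ n := by
          gcongr; exact norm_hypC_half_add_I_mul_coeff_le M n
      _ = _ := by ring
  have hsummable : Summable f := by
    refine Summable.of_norm_bounded
      ((summable_geometric_of_lt_one (norm_nonneg w) hw).mul_left K) fun n => (hf n).trans ?_
    exact div_le_self (by positivity) (by linarith [n.cast_nonneg' (α := ℝ)])
  have hlog : HasSum (fun n : ℕ => K * (‖w‖ ^ (n + 1) / (n + 1))) (K * -Real.log (1 - ‖w‖)) :=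
    (Real.hasSum_pow_div_log_of_abs_lt_one (by rwa [abs_norm])).mul_left K
  have htail : ‖∑' n, f (n + 1)‖ ≤ K * -Real.log (1 - ‖w‖) := by
    refine tsum_of_norm_bounded hlog fun n => (hf (n + 1)).trans ?_
    push_cast
    rw [mul_div_assoc]
    gcongr
    linarith
  have hhead : ‖f 0‖ ≤ K := by simpa using hf 0
  calc ‖hypC _ _ 1 w‖ = ‖f 0 + ∑' n, f (n + 1)‖ := by rw [hypC, hsummable.tsum_eq_zero_add]
    _ ≤ K + K * -Real.log (1 - ‖w‖) := (norm_add_le _ _).trans (add_le_add hhead htail)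
    _ = _ := by ring

theorem norm_Ek_le (M : ℝ) {t z : ℝ} (hz0 : 0 ≤ z) (hz : z ≤ 1 - Real.exp (-t)) :
    ‖Ek M z t 0‖ ≤
      Real.exp (5 * M ^ 2) * (1 + t) * ((1 + Real.exp (-t)) ^ 2 - z ^ 2) ^ (-(1 / 2) : ℝ) := by
  set e := Real.exp (-t) with he
  set A := (1 + e) ^ 2 - z ^ 2
  set N := (1 - e) ^ 2 - z ^ 2
  have he0 : 0 < e := Real.exp_pos _
  have hA : 0 < A := by nlinarith
  have hA4 : A ≤ 4 := by nlinarith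
  have hN : 0 ≤ N := by nlinarith
  have hζ : ‖((N / A : ℝ) : ℂ)‖ = N / A := by
    rw [Complex.norm_real, Real.norm_of_nonneg (by positivity)]
  have hlog : -Real.log (1 - N / A) ≤ t := by
    have hζ1 : 1 - N / A = 4 * e / A := by field_simp; ring
    rw [hζ1, Real.log_div (by positivity) hA.ne', Real.log_mul (by norm_num) he0.ne', he,
      Real.log_exp]
    linarith [Real.log_le_log hA hA4]
  have hEk : Ek M z t 0 = ((4 * e : ℝ) : ℂ) ^ (I * M) * ((A : ℝ) : ℂ) ^ (-(1 / 2 : ℂ) - I * M) *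
      hypC (1 / 2 + I * M) (1 / 2 + I * M) 1 ((N / A : ℝ) : ℂ) := by
    simp only [Ek, neg_zero, Real.exp_zero, zero_sub, ← he, A, N]
    push_cast
    ring_nf
  have hF := norm_hypC_half_add_I_mul_le M (w := ((N / A : ℝ) : ℂ))
    (by rw [hζ, div_lt_one hA]; nlinarith)
  rw [hζ] at hF
  have hre₁ : (I * M).re = 0 := by simp
  have hre₂ : (-(1 / 2 : ℂ) - I * M).re = -(1 / 2) := by simp
  rw [hEk, norm_mul, norm_mul, Complex.norm_cpow_eq_rpow_re_of_pos (by positivity),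
    Complex.norm_cpow_eq_rpow_re_of_pos hA, hre₁, hre₂, Real.rpow_zero, one_mul]
  calc _ ≤ A ^ (-(1 / 2) : ℝ) * (Real.exp (5 * M ^ 2) * (1 + t)) := by
        gcongr
        exact hF.trans (by gcongr; linarith)
    _ = _ := by ring

open intervalIntegral MeasureTheory

theorem integral_rpow_neg_le {a c p : ℝ} (ha : 0 < a) (hac : a ≤ c) (hp0 : 0 ≤ p) (hp1 : p < 1) :
    ∫ u in a..c, u ^ (-p) ≤ (c - a) * c ^ (-p) / (1 - p) := by
  have hc : 0 < c := ha.trans_le hac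
  rw [integral_rpow (Or.inl (by linarith)), neg_add_eq_sub, Real.rpow_sub hc, Real.rpow_sub ha,
    Real.rpow_one, Real.rpow_one, Real.rpow_neg hc.le]
  refine div_le_div_of_nonneg_right ?_ (by linarith)
  calc c / c ^ p - a / a ^ p ≤ c / c ^ p - a / c ^ p := by gcongr
    _ = _ := by ring

theorem integral_one_add_sub_rpow_neg_le {e p : ℝ} (he : 0 < e) (he1 : e ≤ 1) (hp0 : 0 ≤ p)
    (hp1 : p < 1) : ∫ z in (0 : ℝ)..1 - e, (1 + e - z) ^ (-p) ≤ (1 - e) / (1 - p) := by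
  have hpow : (1 + e - 0) ^ (-p) ≤ 1 :=
    Real.rpow_le_one_of_one_le_of_nonpos (by linarith) (by linarith)
  rw [integral_comp_sub_left (fun u => u ^ (-p))]
  calc _ ≤ (1 + e - 0 - (1 + e - (1 - e))) * (1 + e - 0) ^ (-p) / (1 - p) :=
        integral_rpow_neg_le (by linarith) (by linarith) hp0 hp1
    _ ≤ (1 - e) / (1 - p) := by
        rw [div_le_div_iff_of_pos_right (by linarith)]
        nlinarith

theorem integral_norm_Ek_rpow_le (M : ℝ) {ρ : ℝ} (hρ0 : 0 < ρ) (hρ2 : ρ < 2) {t : ℝ}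
    (ht : 0 ≤ t) :
    ∫ z in (0 : ℝ)..1 - Real.exp (-t), ‖Ek M z t 0‖ ^ ρ ≤
      (Real.exp (5 * M ^ 2) * (1 + t)) ^ ρ * (2 / (2 - ρ) * (1 - Real.exp (-t))) := by
  set e := Real.exp (-t)
  set K := Real.exp (5 * M ^ 2)
  have he0 : 0 < e := Real.exp_pos _
  have he1 : e ≤ 1 := Real.exp_le_one_iff.2 (by linarith)
  have hpt : ∀ z ∈ Set.Ioc 0 (1 - e),
      ‖Ek M z t 0‖ ^ ρ ≤ (K * (1 + t)) ^ ρ * (1 + e - z) ^ (-(ρ / 2)) := by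
    rintro z ⟨hz0, hz⟩
    have hA : 1 + e - z ≤ (1 + e) ^ 2 - z ^ 2 := by nlinarith
    have hB : 0 < 1 + e - z := by linarith
    calc ‖Ek M z t 0‖ ^ ρ ≤ (K * (1 + t) * ((1 + e) ^ 2 - z ^ 2) ^ (-(1 / 2) : ℝ)) ^ ρ := by
          gcongr; exact norm_Ek_le M hz0.le hz
      _ ≤ (K * (1 + t) * (1 + e - z) ^ (-(1 / 2) : ℝ)) ^ ρ := by
          refine Real.rpow_le_rpow
            (mul_nonneg (by positivity) (Real.rpow_nonneg (hB.trans_le hA).le _))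
            (mul_le_mul_of_nonneg_left ?_ (by positivity)) hρ0.le
          exact Real.rpow_le_rpow_of_nonpos hB hA (by norm_num)
      _ = _ := by
          rw [Real.mul_rpow (by positivity) (Real.rpow_nonneg hB.le _), ← Real.rpow_mul hB.le]
          ring_nf
  have hint : IntervalIntegrable (fun z => (K * (1 + t)) ^ ρ * (1 + e - z) ^ (-(ρ / 2)))
      volume 0 (1 - e) := by
    refine (ContinuousOn.rpow_const (by fun_prop) fun z hz => Or.inl ?_).intervalIntegrable
      |>.const_mul _
    rw [Set.uIcc_of_le (by linarith)] at hz
    linarith [hz.2]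
  calc _ ≤ ∫ z in (0 : ℝ)..1 - e, (K * (1 + t)) ^ ρ * (1 + e - z) ^ (-(ρ / 2)) := by
        rw [integral_of_le (by linarith), integral_of_le (by linarith)]
        exact setIntegral_mono_of_nonneg (fun _ _ => by positivity) hpt hint.1
    _ ≤ (K * (1 + t)) ^ ρ * ((1 - e) / (1 - ρ / 2)) := by
        rw [intervalIntegral.integral_const_mul]
        gcongr
        exact integral_one_add_sub_rpow_neg_le he0 he1 (by positivity) (by linarith)
    _ = _ := by
        congr 1
        field_simp

theorem K1_Lrho_estimate_general (M : ℝ) (ρ : ℝ) (hρ1 : 1 ≤ ρ) (hρ2 : ρ < 2) :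
    ∃ C > 0, ∀ t : ℝ, 0 < t →
      (∫ z in (0:ℝ)..(1 - Real.exp (-t)), ‖Ek M z t 0‖ ^ ρ) ^ (1/ρ)
        ≤ C * (1 + t) * (1 - Real.exp (-t)) ^ (1/ρ) := by
  have hρ0 : 0 < ρ := by linarith
  refine ⟨Real.exp (5 * M ^ 2) * (2 / (2 - ρ)) ^ (1 / ρ), by positivity, fun t ht => ?_⟩
  have hL : 0 ≤ 1 - Real.exp (-t) := by linarith [Real.exp_le_one_iff.2 (neg_nonpos.2 ht.le)]
  calc _ ≤ ((Real.exp (5 * M ^ 2) * (1 + t)) ^ ρ * (2 / (2 - ρ) * (1 - Real.exp (-t)))) ^ (1 / ρ) :=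
        Real.rpow_le_rpow (integral_nonneg hL fun _ _ => by positivity)
          (integral_norm_Ek_rpow_le M hρ0 hρ2 ht.le) (by positivity)
    _ = _ := by
        rw [Real.mul_rpow (by positivity) (by positivity), one_div,
          Real.rpow_rpow_inv (by positivity) hρ0.ne', Real.mul_rpow (by positivity) hL]
        ring

/-- The kernel `K₁(z,t) = E(z,t;0,0)` satisfies, for every `ρ ∈ [1,2)`,
`(∫₀^{1-e^{-t}} |K₁(z,t)|^ρ dz)^{1/ρ} ≤ C (1+t)(1-e^{-t})^{1/ρ}` for all `t > 0`. -/
theorem K1_Lrho_estimate (M : ℝ) (hM : 0 ≤ M) (ρ : ℝ) (hρ1 : 1 ≤ ρ) (hρ2 : ρ < 2) :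
    ∃ C > 0, ∀ t : ℝ, 0 < t →
      (∫ z in (0:ℝ)..(1 - Real.exp (-t)), ‖Ek M z t 0‖ ^ ρ) ^ (1/ρ)
        ≤ C * (1 + t) * (1 - Real.exp (-t)) ^ (1/ρ) :=
  K1_Lrho_estimate_general M ρ hρ1 hρ2
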